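/- Let k ≥ 1 and define w_n by w_0 = ε, w_{n+1} = (w_n δ_{n+1})^E with δ_1 = ⋯ = δ_k = 0 and δ_{k+1} = 1. Then w_{k+1} = (01)^k 10 (01)^k, and Γ = {2k-2, 2k, 2k+1} is a string attractor of w_{k+1}. -/

import Mathlib

def occursAt (f w : List Bool) (i : ℕ) : Prop :=
  i + f.length ≤ w.length ∧ (w.drop i).take f.length = f

def IsAttractor (w : List Bool) (Γ : Finset ℕ) : Prop :=
  (∀ γ ∈ Γ, γ < w.length) ∧
  ∀ f : List Bool, f ≠ [] → f <:+: w →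
    ∃ i, occursAt f w i ∧ ∃ γ ∈ Γ, i ≤ γ ∧ γ < i + f.length

def Emap (w : List Bool) : List Bool := (w.reverse).map (fun b => !b)

def IsPal (w : List Bool) : Prop := w.reverse = w

def IsAntipal (w : List Bool) : Prop := Emap w = w

def IsPalClosure (w p : List Bool) : Prop :=
  IsPal p ∧ w <+: p ∧ ∀ q, IsPal q → w <+: q → p.length ≤ q.length

def IsAntipalClosure (w p : List Bool) : Prop :=
  IsAntipal p ∧ w <+: p ∧ ∀ q, IsAntipal q → w <+: q → p.length ≤ q.length

/-! The words `w n` for `n ≤ k` are `(01)^n`: an antipalindrome of length at most twice the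
length of a prefix `u` is determined by `u` and its length, since every position outside `u` is
mirrored into `u`. So the closure of `(01)^n 0` is `(01)^(n+1)`, and the closure of `(01)^k 1` is
`(01)^k 10 (01)^k`, the `1` at position `2k` forcing length `4k + 2`. A factor of this word that
misses `Γ` avoids the central `10`, hence is a factor of `(01)^k`; such a factor, with the parity of
its start kept, can be slid to end at position `2k - 2` or `2k - 1`, except the factor `1`, which
occurs at `2k`. -/

theorem Emap_append (u v : List Bool) : Emap (u ++ v) = Emap v ++ Emap u := by
  simp [Emap]

namespace IsAntipal

variable {p q u : List Bool}

theorem getElem_eq_not (hp : IsAntipal p) {i : ℕ} (hi : i < p.length) :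
    p[i] = !p[p.length - 1 - i] := by
  conv_lhs => rw [← List.getElem_of_eq hp (by simpa [Emap] using hi)]
  simp [Emap]

theorem length_even (hp : IsAntipal p) : Even p.length := by
  by_contra hodd
  have := hp.getElem_eq_not (i := p.length / 2) (by grind)
  simp [show p.length - 1 - p.length / 2 = p.length / 2 by grind] at this

/-- Every position either lies in `u` or is mirrored into it. -/
theorem eq_of_isPrefix (hp : IsAntipal p) (hq : IsAntipal q) (hup : u <+: p) (huq : u <+: q)
    (hlen : p.length = q.length) (hhalf : p.length ≤ 2 * u.length) : p = q := by
  refine List.ext_getElem hlen fun i hip hiq => ?_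
  by_cases hiu : i < u.length
  · rw [← hup.getElem hiu, ← huq.getElem hiu]
  · have hmirror : p.length - 1 - i < u.length := by omega
    rw [hp.getElem_eq_not hip, hq.getElem_eq_not hiq, ← hup.getElem hmirror]
    simp only [hlen] at hmirror ⊢
    rw [← huq.getElem hmirror]

end IsAntipal

theorem IsAntipalClosure.eq_of_isAntipal {u p q : List Bool} (hp : IsAntipalClosure u p)
    (hq : IsAntipal q) (huq : u <+: q) (hlen : q.length ≤ p.length)
    (hhalf : q.length ≤ 2 * u.length) : p = q :=
  hp.1.eq_of_isPrefix hq hp.2.1 huq (le_antisymm (hp.2.2 q hq huq) hlen)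
    ((hp.2.2 q hq huq).trans hhalf)

def altWord (n : ℕ) : List Bool := (List.replicate n [false, true]).flatten

def closureWord (k : ℕ) : List Bool := altWord k ++ [true, false] ++ altWord k

theorem altWord_succ (n : ℕ) : altWord (n + 1) = altWord n ++ [false, true] := by
  simp [altWord, List.replicate_succ']

theorem altWord_succ' (n : ℕ) : altWord (n + 1) = [false, true] ++ altWord n := by
  simp [altWord, List.replicate_succ]

@[simp] theorem length_altWord (n : ℕ) : (altWord n).length = 2 * n := by
  simp [altWord]; ring

@[simp] theorem length_closureWord (k : ℕ) : (closureWord k).length = 4 * k + 2 := by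
  simp [closureWord]; ring

theorem getElem_altWord (n i : ℕ) (hi : i < (altWord n).length) :
    (altWord n)[i] = decide (i % 2 = 1) := by
  induction n with
  | zero => simp at hi
  | succ n ih =>
    simp only [altWord_succ]
    by_cases h : i < 2 * n
    · rw [List.getElem_append_left (by simpa using h), ih]
    · rw [List.getElem_append_right (by simpa using h)]
      have : i = 2 * n ∨ i = 2 * n + 1 := by simp at hi; omega
      rcases this with rfl | rfl <;> simp [Nat.add_mod]

theorem isAntipal_altWord (n : ℕ) : IsAntipal (altWord n) := by
  induction n with
  | zero => rfl
  | succ n ih =>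
    unfold IsAntipal at ih ⊢
    calc Emap (altWord (n + 1)) = Emap [false, true] ++ Emap (altWord n) := by
          rw [altWord_succ, Emap_append]
      _ = altWord (n + 1) := by rw [ih, altWord_succ']; rfl

theorem isAntipal_closureWord (k : ℕ) : IsAntipal (closureWord k) := by
  unfold IsAntipal closureWord
  rw [Emap_append, Emap_append, isAntipal_altWord k, List.append_assoc]
  rfl

theorem IsAntipalClosure.eq_altWord_succ {n : ℕ} {p : List Bool}
    (hp : IsAntipalClosure (altWord n ++ [false]) p) : p = altWord (n + 1) := by
  have hlen := hp.2.1.length_le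
  have heven := hp.1.length_even
  simp only [List.length_append, length_altWord, List.length_singleton] at hlen
  refine hp.eq_of_isAntipal (isAntipal_altWord _) ⟨[true], by simp [altWord_succ]⟩ ?_ ?_ <;>
    simp only [length_altWord, List.length_append, List.length_singleton] <;> grind

/-- The letter `1` at position `2k` must be mirrored onto a `0`; in an antipalindrome shorter than
`4k + 2` its mirror image is an odd position of the prefix `(01)^k`, which carries a `1`. -/
theorem IsAntipal.four_mul_add_two_le_length {k : ℕ} {p : List Bool} (hp : IsAntipal p)
    (hpre : altWord k ++ [true] <+: p) : 4 * k + 2 ≤ p.length := by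
  have hlen := hpre.length_le
  have heven := hp.length_even
  simp only [List.length_append, length_altWord, List.length_singleton] at hlen
  by_contra! hshort
  have hmid : p[2 * k] = true := by
    rw [← hpre.getElem (by simp)]
    simp
  have hmirror : p[p.length - 1 - 2 * k] = true := by
    rw [← hpre.getElem (by simp; omega), List.getElem_append_left (by simp; grind),
      getElem_altWord]
    grind
  have := hp.getElem_eq_not (i := 2 * k) (by omega)
  simp [hmid, hmirror] at this

theorem IsAntipalClosure.eq_closureWord {k : ℕ} {p : List Bool}
    (hp : IsAntipalClosure (altWord k ++ [true]) p) : p = closureWord k :=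
  hp.eq_of_isAntipal (isAntipal_closureWord k) ⟨false :: altWord k, by simp [closureWord]⟩
    (by simpa using hp.1.four_mul_add_two_le_length hp.2.1) (by simp; omega)

theorem occursAt_iff_getElem {f w : List Bool} {i : ℕ} :
    occursAt f w i ↔
      ∃ h : i + f.length ≤ w.length, ∀ t (ht : t < f.length), f[t] = w[i + t] := by
  constructor
  · rintro ⟨hle, htake⟩
    refine ⟨hle, fun t ht => ?_⟩
    rw [← List.getElem_of_eq htake (by simp; omega)]
    simp
  · rintro ⟨hle, hlet⟩
    refine ⟨hle, List.ext_getElem (by simp; omega) fun t _ ht => ?_⟩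
    simp [hlet t ht]

theorem occursAt_of_append_eq {s f t w : List Bool} (h : s ++ f ++ t = w) :
    occursAt f w s.length := by
  subst h
  exact ⟨by simp, by simp⟩

theorem getElem_closureWord_of_ne {k i : ℕ} (hi : i < (closureWord k).length) (h₁ : i ≠ 2 * k)
    (h₂ : i ≠ 2 * k + 1) : (closureWord k)[i] = decide (i % 2 = 1) := by
  simp only [closureWord, List.append_assoc]
  by_cases hlt : i < 2 * k
  · rw [List.getElem_append_left (by simpa using hlt), getElem_altWord]
  · simp only [length_closureWord] at hi
    rw [List.getElem_append_right (by simpa using hlt),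
      List.getElem_append_right (by simp; omega), getElem_altWord]
    simp only [length_altWord, List.length_cons, List.length_nil, decide_eq_decide]
    omega

/-- The witness ends at position `2k - 2` or `2k - 1` and starts with the parity of `i`, except for
the factor `1`, found at position `2k`. -/
theorem exists_occursAt_closureWord_of_occursAt_altWord {k i : ℕ} {f : List Bool} (hf : f ≠ [])
    (hocc : occursAt f (altWord k) i) :
    ∃ j, occursAt f (closureWord k) j ∧
      ∃ γ ∈ ({2 * k - 2, 2 * k, 2 * k + 1} : Finset ℕ), j ≤ γ ∧ γ < j + f.length := by
  have hpos := List.length_pos_iff.2 hf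
  obtain ⟨hle, hlet⟩ := occursAt_iff_getElem.1 hocc
  simp only [length_altWord] at hle
  have hparity : ∀ t (ht : t < f.length), f[t] = decide ((i + t) % 2 = 1) := fun t ht => by
    rw [hlet t ht, getElem_altWord]
  by_cases hone : f.length = 1 ∧ i % 2 = 1
  · refine ⟨2 * k, occursAt_iff_getElem.2 ⟨by simp; omega, fun t ht => ?_⟩, 2 * k, by simp,
      le_rfl, by omega⟩
    obtain rfl : t = 0 := by omega
    simp [hparity 0 ht, hone.2, closureWord]
  · set j := if (2 * k - f.length) % 2 = i % 2 then 2 * k - f.length else 2 * k - f.length - 1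
    have hj : j % 2 = i % 2 ∧ j + f.length ≤ 2 * k ∧ j ≤ 2 * k - 2 ∧ 2 * k - 2 < j + f.length := by
      grind
    refine ⟨j, occursAt_iff_getElem.2 ⟨by simp; omega, fun t ht => ?_⟩, 2 * k - 2, by simp,
      hj.2.2.1, hj.2.2.2⟩
    rw [hparity t ht, getElem_closureWord_of_ne _ (by omega) (by omega), decide_eq_decide]
    omega

theorem isAttractor_closureWord (k : ℕ) :
    IsAttractor (closureWord k) ({2 * k - 2, 2 * k, 2 * k + 1} : Finset ℕ) := by
  refine ⟨by simp; omega, fun f hf ⟨s, t, hst⟩ => ?_⟩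
  have hpos := List.length_pos_iff.2 hf
  have hocc := occursAt_of_append_eq hst
  by_cases hcov : ∃ γ ∈ ({2 * k - 2, 2 * k, 2 * k + 1} : Finset ℕ),
      s.length ≤ γ ∧ γ < s.length + f.length
  · exact ⟨s.length, hocc, hcov⟩
  simp only [Finset.mem_insert, Finset.mem_singleton, exists_eq_or_imp, exists_eq_left,
    not_or, not_and, not_lt] at hcov
  obtain ⟨hle, hlet⟩ := occursAt_iff_getElem.1 hocc
  simp only [length_closureWord] at hle
  -- A factor missing `Γ` avoids the central `10`, so it is a factor of one of the two `(01)^k`.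
  refine exists_occursAt_closureWord_of_occursAt_altWord hf
    (i := if 2 * k + 2 ≤ s.length then s.length - (2 * k + 2) else s.length)
    (occursAt_iff_getElem.2 ⟨by simp; split_ifs <;> omega, fun u hu => ?_⟩)
  rw [hlet u hu, getElem_closureWord_of_ne _ (by omega) (by omega), getElem_altWord,
    decide_eq_decide]
  split_ifs <;> omega

theorem stmt_12_general (k : ℕ) (w : ℕ → List Bool)
    (h0 : w 0 = [])
    (hclos0 : ∀ n < k, IsAntipalClosure (w n ++ [false]) (w (n + 1)))
    (hclos1 : IsAntipalClosure (w k ++ [true]) (w (k + 1))) :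
    w (k + 1) =
      (List.replicate k [false, true]).flatten ++ [true, false] ++
        (List.replicate k [false, true]).flatten ∧
    IsAttractor (w (k + 1)) ({2 * k - 2, 2 * k, 2 * k + 1} : Finset ℕ) := by
  have hprefix : ∀ n ≤ k, w n = altWord n := by
    intro n hn
    induction n with
    | zero => exact h0
    | succ n ih => exact (ih (by omega) ▸ hclos0 n hn).eq_altWord_succ
  have hw : w (k + 1) = closureWord k := (hprefix k le_rfl ▸ hclos1).eq_closureWord
  exact hw ▸ ⟨rfl, isAttractor_closureWord k⟩

theorem stmt_12 (k : ℕ) (hk : 1 ≤ k) (w : ℕ → List Bool)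
    (h0 : w 0 = [])
    (hclos0 : ∀ n < k, IsAntipalClosure (w n ++ [false]) (w (n + 1)))
    (hclos1 : IsAntipalClosure (w k ++ [true]) (w (k + 1))) :
    w (k + 1) =
      (List.replicate k [false, true]).flatten ++ [true, false] ++
        (List.replicate k [false, true]).flatten ∧
    IsAttractor (w (k + 1)) ({2 * k - 2, 2 * k, 2 * k + 1} : Finset ℕ) :=
  stmt_12_general k w h0 hclos0 hclos1
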